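/- Let A and B be ideals of a locally solid vector lattice (X,τ). Then u_Aτ = u_Bτ if and only if the τ-closure of A equals the τ-closure of B. In particular, u_Aτ = uτ if and only if A is τ-dense in X. -/

import Mathlib

open Filter Set Topology

variable {X : Type*} [Lattice X] [AddCommGroup X] [Module ℝ X]
  [CovariantClass X X (· + ·) (· ≤ ·)] [PosSMulMono ℝ X]

/-- The Archimedean property for a lattice-ordered group. -/
def VLArchimedean (X : Type*) [Lattice X] [AddCommGroup X] : Prop :=
  ∀ x y : X, 0 ≤ x → (∀ n : ℕ, n • x ≤ y) → x = 0

/-- A set is solid if `x ∈ S` and `|y| ≤ |x|` imply `y ∈ S`. -/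
def IsSolid (S : Set X) : Prop := ∀ ⦃x y : X⦄, x ∈ S → |y| ≤ |x| → y ∈ S

/-- A locally solid (linear) topology on a vector lattice. -/
def IsLocallySolidTop (τ : TopologicalSpace X) : Prop :=
  @IsTopologicalAddGroup X τ _ ∧ @ContinuousSMul ℝ X _ _ τ ∧
    ∀ U ∈ @nhds X τ 0, ∃ V ∈ @nhds X τ 0, IsSolid V ∧ V ⊆ U

/-- An order ideal: a solid linear subspace. -/
def IsOrderIdeal (A : Set X) : Prop :=
  0 ∈ A ∧ (∀ x ∈ A, ∀ y ∈ A, x + y ∈ A) ∧ (∀ (c : ℝ), ∀ x ∈ A, c • x ∈ A) ∧ IsSolid A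

/-- The order ideal generated by a set. -/
def idealGenerated (A : Set X) : Set X := ⋂₀ {I | IsOrderIdeal I ∧ A ⊆ I}

/-- A band: an order ideal closed under existing suprema. -/
def IsBand (B : Set X) : Prop :=
  IsOrderIdeal B ∧ ∀ D ⊆ B, ∀ x : X, IsLUB D x → x ∈ B

/-- The band generated by a set. -/
def bandGenerated (A : Set X) : Set X := ⋂₀ {B | IsBand B ∧ A ⊆ B}

/-- `A` is a countable order basis: `A` is at most countable and generates `X` as a band. -/
def CountableOrderBasis (A : Set X) : Prop := A.Countable ∧ bandGenerated A = Set.univ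

/-- The neighbourhood filter of zero of the unbounded topology `u_A τ`:
generated by the sets `{x : |x| ⊓ a ∈ U}` for `U` a `τ`-neighbourhood of zero, `a ∈ A₊`. -/
def unbNhdsZero (τ : TopologicalSpace X) (A : Set X) : Filter X :=
  ⨅ a ∈ {a ∈ A | 0 ≤ a}, Filter.comap (fun x => |x| ⊓ a) (@nhds X τ 0)

/-- The unbounded topology `u_A τ` induced by the ideal `A`; `u τ = unbTopology τ Set.univ`. -/
def unbTopology (τ : TopologicalSpace X) (A : Set X) : TopologicalSpace X :=
  TopologicalSpace.mkOfNhds fun x => Filter.map (x + ·) (unbNhdsZero τ A)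

/-- A sublattice/ideal is order dense if every nonzero positive vector dominates a
nonzero positive vector of it. -/
def OrderDense (A : Set X) : Prop := ∀ x : X, 0 < x → ∃ y ∈ A, 0 < y ∧ y ≤ x

/-- A minimal topology: a Hausdorff locally solid topology with no strictly coarser
Hausdorff locally solid topology. (In Mathlib's order on `TopologicalSpace`,
`τ ≤ σ` means `τ` is finer than `σ`.) -/
def IsMinimalTop (τ : TopologicalSpace X) : Prop :=
  IsLocallySolidTop τ ∧ @T2Space X τ ∧
    ∀ σ : TopologicalSpace X, IsLocallySolidTop σ → @T2Space X σ → τ ≤ σ → σ = τ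

/-- The countable sup property. -/
def CountableSupProperty (Y : Type*) [Lattice Y] : Prop :=
  ∀ S : Set Y, ∀ x : Y, S.Nonempty → IsLUB S x → ∃ C ⊆ S, C.Countable ∧ IsLUB C x

/-- Order convergence to zero of a net: there is a downward directed set `D` with
infimum `0`, each member of which eventually dominates `|x α|`. -/
def OrderNull {ι : Type*} [Preorder ι] (x : ι → X) : Prop :=
  ∃ D : Set X, D.Nonempty ∧ (∀ a ∈ D, ∀ b ∈ D, ∃ c ∈ D, c ≤ a ∧ c ≤ b) ∧
    IsGLB D 0 ∧ ∀ d ∈ D, ∃ α₀ : ι, ∀ α, α₀ ≤ α → |x α| ≤ d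

/-- Unbounded order (uo-) convergence to zero of a net. -/
def UoNull {ι : Type*} [Preorder ι] (x : ι → X) : Prop :=
  ∀ u : X, 0 ≤ u → OrderNull (fun α => |x α| ⊓ u)

/-- A set is topologically bounded if it is absorbed by every neighbourhood of zero. -/
def TopBounded (τ : TopologicalSpace X) (S : Set X) : Prop :=
  ∀ U ∈ @nhds X τ 0, ∃ l : ℝ, 0 < l ∧ ∀ x ∈ S, l • x ∈ U

/-- A locally bounded topology: it has a topologically bounded neighbourhood of zero. -/
def LocallyBoundedTop (τ : TopologicalSpace X) : Prop :=
  ∃ V ∈ @nhds X τ 0, TopBounded τ V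

/-- A submetrizable topology: finer than some metrizable linear topology.
(In Mathlib's order on `TopologicalSpace`, `τ ≤ σ` means `τ` is finer than `σ`.) -/
def Submetrizable (τ : TopologicalSpace X) : Prop :=
  ∃ σ : TopologicalSpace X, @IsTopologicalAddGroup X σ _ ∧ @ContinuousSMul ℝ X _ _ σ ∧
    @TopologicalSpace.MetrizableSpace X σ ∧ τ ≤ σ

/-- A Riesz submetrizable topology: finer than some metrizable locally solid topology. -/
def RieszSubmetrizable (τ : TopologicalSpace X) : Prop :=
  ∃ σ : TopologicalSpace X, IsLocallySolidTop σ ∧ @TopologicalSpace.MetrizableSpace X σ ∧ τ ≤ σ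

/-- Dedekind (order) completeness. -/
def DedekindComplete (Y : Type*) [Lattice Y] : Prop :=
  ∀ S : Set Y, S.Nonempty → BddAbove S → ∃ x, IsLUB S x

/-- Lateral completeness: every nonempty set of pairwise disjoint positive vectors
has a supremum. -/
def LaterallyComplete (Y : Type*) [Lattice Y] [AddCommGroup Y] : Prop :=
  ∀ S : Set Y, S.Nonempty → (∀ x ∈ S, 0 ≤ x) → (S.Pairwise fun a b => a ⊓ b = 0) →
    ∃ x, IsLUB S x


/-!
If `B ⊆ cl A`, approximate `b ∈ B₊` by `a ∈ A`: since `||x| ∧ b - |x| ∧ |a|| ≤ |b - a|`, every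
`u_B τ`-neighbourhood of zero is a `u_A τ`-neighbourhood. Conversely, if `u_A τ` is finer than
`u_B τ`, the neighbourhood `{x : |x| ∧ b ∈ V}` contains some `{x : |x| ∧ a ∈ U}` with `a ∈ A₊`.
The truncations `b ∧ n a ∈ A` leave remainders `d = (b - n a)⁺ ≤ b` with `d ∧ a ≤ b / (n + 1)`,
so for large `n` we get `|d| ∧ a ∈ U`, whence `d = |d| ∧ b ∈ V`. Hence `B₊ ⊆ cl A`, and
`B ⊆ cl A` because the closure of an ideal is a subgroup.
-/

section LatticeOrderedGroup

variable {G : Type*} [Lattice G] [AddCommGroup G] [AddLeftMono G]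

theorem add_inf_le_inf_add_inf {u v a : G} (hu : 0 ≤ u) (hv : 0 ≤ v) (ha : 0 ≤ a) :
    (u + v) ⊓ a ≤ u ⊓ a + v ⊓ a := by
  rw [add_inf, inf_add, inf_add]
  refine le_inf (le_inf inf_le_left ?_) (le_inf ?_ ?_) <;> refine inf_le_right.trans ?_
  · exact le_add_of_nonneg_right hv
  · exact le_add_of_nonneg_left hu
  · exact le_add_of_nonneg_left ha

theorem succ_nsmul_posPart_sub_nsmul_inf_le {x y : G} (hx : 0 ≤ x) (hy : 0 ≤ y) (n : ℕ) :
    (n + 1) • ((x - n • y)⁺ ⊓ y) ≤ x := by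
  set z := (x - n • y)⁺ ⊓ y
  suffices ∀ k ≤ n + 1, k • z ≤ x from this _ le_rfl
  intro k
  induction k with
  | zero => simpa using hx
  | succ k ih =>
    intro hk
    have hkz : k • z ≤ n • y :=
      (nsmul_le_nsmul_right inf_le_right k).trans (nsmul_le_nsmul_left hy (by omega))
    have hz : z ≤ (x - k • z)⁺ := inf_le_left.trans (posPart_mono (sub_le_sub_left hkz x))
    calc (k + 1) • z = k • z + z := succ_nsmul z k
      _ ≤ k • z + (x - k • z)⁺ := add_le_add le_rfl hz
      _ = x ⊔ k • z := by rw [posPart_def, add_sup, add_sub_cancel, add_zero]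
      _ ≤ x := sup_le le_rfl (ih (by omega))

theorem IsSolid.mem_of_nonneg_of_le {S : Set G} (hS : IsSolid S) {x y : G} (hx : x ∈ S)
    (hy : 0 ≤ y) (hyx : y ≤ x) : y ∈ S :=
  hS hx ((abs_of_nonneg hy).trans_le (hyx.trans (le_abs_self x)))

theorem IsSolid.abs_mem {S : Set G} (hS : IsSolid S) {x : G} (hx : x ∈ S) : |x| ∈ S :=
  hS hx (abs_abs x).le

end LatticeOrderedGroup

section OrderIdeal

variable {E : Type*} [Lattice E] [AddCommGroup E] [Module ℝ E]

theorem isOrderIdeal_univ : IsOrderIdeal (univ : Set E) :=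
  ⟨trivial, fun _ _ _ _ => trivial, fun _ _ _ => trivial, fun _ _ _ _ => trivial⟩

namespace IsOrderIdeal

variable {A : Set E} (hA : IsOrderIdeal A)
include hA

def toAddSubgroup : AddSubgroup E where
  carrier := A
  zero_mem' := hA.1
  add_mem' {a b} ha hb := hA.2.1 a ha b hb
  neg_mem' {x} hx := by simpa using hA.2.2.1 (-1) x hx

variable [AddLeftMono E]

theorem posPart_mem {x : E} (hx : x ∈ A) : x⁺ ∈ A :=
  hA.2.2.2.mem_of_nonneg_of_le (hA.2.2.2.abs_mem hx) (posPart_nonneg x)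
    (sup_le (le_abs_self x) (abs_nonneg x))

theorem negPart_mem {x : E} (hx : x ∈ A) : x⁻ ∈ A := by
  simpa using hA.posPart_mem (hA.toAddSubgroup.neg_mem hx)

theorem sup_mem {a b : E} (ha : a ∈ A) (hb : b ∈ A) (ha0 : 0 ≤ a) (hb0 : 0 ≤ b) : a ⊔ b ∈ A :=
  hA.2.2.2.mem_of_nonneg_of_le (hA.2.1 a ha b hb) (ha0.trans le_sup_left)
    (sup_le (le_add_of_nonneg_right hb0) (le_add_of_nonneg_left ha0))

theorem inf_nsmul_mem {a : E} (ha : a ∈ A) (ha0 : 0 ≤ a) {b : E} (hb0 : 0 ≤ b) (n : ℕ) :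
    b ⊓ n • a ∈ A :=
  hA.2.2.2.mem_of_nonneg_of_le (hA.toAddSubgroup.nsmul_mem ha n)
    (le_inf hb0 (nsmul_nonneg ha0 n)) inf_le_right

end IsOrderIdeal

end OrderIdeal

section UnboundedTopology

variable {E : Type*} [Lattice E] [AddCommGroup E] [Module ℝ E] [τ : TopologicalSpace E]
  {A B : Set E}

theorem IsLocallySolidTop.hasBasis_nhds_zero (hτ : IsLocallySolidTop τ) :
    (𝓝 (0 : E)).HasBasis (fun U => U ∈ 𝓝 (0 : E) ∧ IsSolid U) id :=
  (𝓝 (0 : E)).basis_sets.restrict hτ.2.2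

theorem IsLocallySolidTop.exists_solid_add_subset (hτ : IsLocallySolidTop τ) {U : Set E}
    (hU : U ∈ 𝓝 0) : ∃ V ∈ 𝓝 (0 : E), IsSolid V ∧ ∀ v ∈ V, ∀ w ∈ V, v + w ∈ U := by
  have := hτ.1
  obtain ⟨W, hW, hWU⟩ := exists_nhds_zero_half hU
  obtain ⟨V, ⟨hV, hVs⟩, hVW⟩ := hτ.hasBasis_nhds_zero.mem_iff.1 hW
  exact ⟨V, hV, hVs, fun v hv w hw => hWU v (hVW hv) w (hVW hw)⟩

variable [AddLeftMono E]

theorem comap_abs_inf_nhds_zero_anti (hτ : IsLocallySolidTop τ) {a b : E} (ha : 0 ≤ a)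
    (hab : a ≤ b) :
    comap (fun x => |x| ⊓ b) (𝓝 0) ≤ comap (fun x => |x| ⊓ a) (𝓝 0) :=
  (hτ.hasBasis_nhds_zero.comap _).ge_iff.2 fun U hU =>
    mem_of_superset (preimage_mem_comap hU.1) fun x hx => hU.2 hx <| by
      rw [abs_of_nonneg (le_inf (abs_nonneg x) ha),
        abs_of_nonneg (le_inf (abs_nonneg x) (ha.trans hab))]
      exact inf_le_inf_left _ hab

theorem hasBasis_unbNhdsZero (hτ : IsLocallySolidTop τ) (hA : IsOrderIdeal A) :
    (unbNhdsZero τ A).HasBasis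
      (fun p : E × Set E => (p.1 ∈ A ∧ 0 ≤ p.1) ∧ p.2 ∈ 𝓝 0 ∧ IsSolid p.2)
      fun p => {x | |x| ⊓ p.1 ∈ p.2} := by
  refine hasBasis_biInf_of_directed (dom := {a ∈ A | 0 ≤ a}) ⟨0, hA.1, le_rfl⟩ _ _
    (fun a _ => hτ.hasBasis_nhds_zero.comap _) ?_
  rintro a ⟨ha, ha0⟩ b ⟨hb, hb0⟩
  exact ⟨a ⊔ b, ⟨hA.sup_mem ha hb ha0 hb0, ha0.trans le_sup_left⟩,
    comap_abs_inf_nhds_zero_anti hτ ha0 le_sup_left,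
    comap_abs_inf_nhds_zero_anti hτ hb0 le_sup_right⟩

theorem pure_zero_le_unbNhdsZero (hτ : IsLocallySolidTop τ) (hA : IsOrderIdeal A) :
    pure 0 ≤ unbNhdsZero τ A :=
  (hasBasis_unbNhdsZero hτ hA).ge_iff.2 fun _ ⟨⟨_, ha0⟩, hU, _⟩ => by
    simpa [inf_eq_left.2 ha0] using mem_of_mem_nhds hU

theorem exists_add_subset_of_mem_unbNhdsZero (hτ : IsLocallySolidTop τ) (hA : IsOrderIdeal A)
    {s : Set E} (hs : s ∈ unbNhdsZero τ A) :
    ∃ t ∈ unbNhdsZero τ A, ∀ v ∈ t, ∀ w ∈ t, v + w ∈ s := by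
  obtain ⟨⟨a, U⟩, ⟨⟨ha, ha0⟩, hU, hUs⟩, hsub⟩ := (hasBasis_unbNhdsZero hτ hA).mem_iff.1 hs
  obtain ⟨V, hV, hVs, hVU⟩ := hτ.exists_solid_add_subset hU
  refine ⟨_, (hasBasis_unbNhdsZero hτ hA).mem_of_mem (i := (a, V)) ⟨⟨ha, ha0⟩, hV, hVs⟩,
    fun v hv w hw => hsub (hUs.mem_of_nonneg_of_le (hVU _ hv _ hw) ?_ ?_)⟩
  · exact le_inf (abs_nonneg _) ha0
  · exact (inf_le_inf_right a (abs_add_le v w)).trans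
      (add_inf_le_inf_add_inf (abs_nonneg v) (abs_nonneg w) ha0)

theorem nhds_unbTopology (hτ : IsLocallySolidTop τ) (hA : IsOrderIdeal A) (x : E) :
    @nhds E (unbTopology τ A) x = map (x + ·) (unbNhdsZero τ A) := by
  refine TopologicalSpace.nhds_mkOfNhds _ x (fun y => ?_) fun y s hs => ?_
  · simpa using map_mono (m := (y + ·)) (pure_zero_le_unbNhdsZero hτ hA)
  · obtain ⟨t, ht, hts⟩ := exists_add_subset_of_mem_unbNhdsZero hτ hA (mem_map.1 hs)
    rw [eventually_map]
    filter_upwards [ht] with w hw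
    exact mem_map.2 (mem_of_superset ht fun z hz => by simpa [add_assoc] using hts w hw z hz)

theorem unbTopology_eq_iff_unbNhdsZero_eq (hτ : IsLocallySolidTop τ) (hA : IsOrderIdeal A)
    (hB : IsOrderIdeal B) :
    unbTopology τ A = unbTopology τ B ↔ unbNhdsZero τ A = unbNhdsZero τ B := by
  refine ⟨fun h => ?_, fun h => by rw [unbTopology, unbTopology, h]⟩
  have h0 := nhds_unbTopology hτ hA 0
  rw [h, nhds_unbTopology hτ hB 0] at h0
  simpa using h0.symm

theorem unbNhdsZero_le_of_subset_closure (hτ : IsLocallySolidTop τ) (hA : IsOrderIdeal A)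
    (hB : IsOrderIdeal B) (hBA : B ⊆ closure A) : unbNhdsZero τ A ≤ unbNhdsZero τ B := by
  have := hτ.1
  refine (hasBasis_unbNhdsZero hτ hB).ge_iff.2 fun ⟨b, U⟩ ⟨⟨hb, hb0⟩, hU, _⟩ => ?_
  obtain ⟨V, hV, hVs, hVU⟩ := hτ.exists_solid_add_subset hU
  obtain ⟨a, ha, hab⟩ := mem_closure_iff_nhds_zero.1 (hBA hb) V hV
  refine mem_of_superset ((hasBasis_unbNhdsZero hτ hA).mem_of_mem
    (i := (|a|, V)) ⟨⟨hA.2.2.2.abs_mem ha, abs_nonneg a⟩, hV, hVs⟩) fun x hx => ?_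
  have hdiff : |x| ⊓ b - |x| ⊓ |a| ∈ V := hVs hab <| calc
    |(|x| ⊓ b) - (|x| ⊓ |a|)| ≤ |b - (|a|)| := by
        simpa only [inf_comm] using abs_inf_sub_inf_le_abs b |a| |x|
    _ ≤ |a - b| := by
        simpa [abs_of_nonneg hb0, abs_sub_comm] using abs_abs_sub_abs_le b a
  simpa using hVU _ hx _ hdiff

theorem mem_closure_of_unbNhdsZero_le [PosSMulMono ℝ E] (hτ : IsLocallySolidTop τ)
    (hA : IsOrderIdeal A) (hB : IsOrderIdeal B) (h : unbNhdsZero τ A ≤ unbNhdsZero τ B) {b : E}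
    (hb : b ∈ B) (hb0 : 0 ≤ b) : b ∈ closure A := by
  have := hτ.1
  have : ContinuousSMul ℝ E := hτ.2.1
  refine mem_closure_iff_nhds_zero.2 fun U hU => ?_
  obtain ⟨V, ⟨hV, hVs⟩, hVU⟩ := hτ.hasBasis_nhds_zero.mem_iff.1 hU
  obtain ⟨⟨a, W⟩, ⟨⟨ha, ha0⟩, hW, hWs⟩, hsub⟩ := (hasBasis_unbNhdsZero hτ hA).mem_iff.1
    (h ((hasBasis_unbNhdsZero hτ hB).mem_of_mem (i := (b, V)) ⟨⟨hb, hb0⟩, hV, hVs⟩))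
  have hscale : Tendsto (fun n : ℕ => ((n : ℝ) + 1)⁻¹ • b) atTop (𝓝 0) := by
    simpa [one_div] using (tendsto_one_div_add_atTop_nhds_zero_nat (𝕜 := ℝ)).smul_const b
  obtain ⟨n, hn⟩ := (hscale.eventually_mem hW).exists
  set d := (b - n • a)⁺
  have htrunc : b ⊓ n • a = b - d := inf_eq_sub_posPart_sub b (n • a)
  have hd0 : 0 ≤ d := posPart_nonneg _
  have hdb : d ≤ b := sub_nonneg.1 (htrunc ▸ le_inf hb0 (nsmul_nonneg ha0 n))
  have hda : d ⊓ a ≤ ((n : ℝ) + 1)⁻¹ • b := calc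
    d ⊓ a = ((n : ℝ) + 1)⁻¹ • ((n + 1) • (d ⊓ a)) := by
        rw [← Nat.cast_smul_eq_nsmul ℝ, Nat.cast_succ, inv_smul_smul₀ (by positivity)]
    _ ≤ ((n : ℝ) + 1)⁻¹ • b :=
        smul_le_smul_of_nonneg_left (succ_nsmul_posPart_sub_nsmul_inf_le hb0 ha0 n) (by positivity)
  have hdV : d ∈ V := by
    have hdW : |d| ⊓ a ∈ W := hWs.mem_of_nonneg_of_le hn (le_inf (abs_nonneg d) ha0)
      (by rwa [abs_of_nonneg hd0])
    simpa [abs_of_nonneg hd0, inf_eq_left.2 hdb] using hsub hdW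
  refine ⟨b ⊓ n • a, hA.inf_nsmul_mem ha ha0 hb0 n, hVU (hVs hdV ?_)⟩
  rw [htrunc, sub_sub_cancel_left, abs_neg]

theorem subset_closure_of_unbNhdsZero_le [PosSMulMono ℝ E] (hτ : IsLocallySolidTop τ)
    (hA : IsOrderIdeal A) (hB : IsOrderIdeal B) (h : unbNhdsZero τ A ≤ unbNhdsZero τ B) :
    B ⊆ closure A := by
  have := hτ.1
  intro b hb
  have hpos {c : E} (hc : c ∈ B) (hc0 : 0 ≤ c) : c ∈ hA.toAddSubgroup.topologicalClosure :=
    mem_closure_of_unbNhdsZero_le hτ hA hB h hc hc0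
  have hb' : b⁺ - b⁻ ∈ hA.toAddSubgroup.topologicalClosure := sub_mem
    (hpos (hB.posPart_mem hb) (posPart_nonneg b)) (hpos (hB.negPart_mem hb) (negPart_nonneg b))
  rwa [posPart_sub_negPart] at hb'

theorem unbNhdsZero_le_iff [PosSMulMono ℝ E] (hτ : IsLocallySolidTop τ) (hA : IsOrderIdeal A)
    (hB : IsOrderIdeal B) : unbNhdsZero τ A ≤ unbNhdsZero τ B ↔ B ⊆ closure A :=
  ⟨subset_closure_of_unbNhdsZero_le hτ hA hB, unbNhdsZero_le_of_subset_closure hτ hA hB⟩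

theorem unbTopology_eq_iff [PosSMulMono ℝ E] (hτ : IsLocallySolidTop τ) (hA : IsOrderIdeal A)
    (hB : IsOrderIdeal B) : unbTopology τ A = unbTopology τ B ↔ closure A = closure B := by
  rw [unbTopology_eq_iff_unbNhdsZero_eq hτ hA hB, le_antisymm_iff, unbNhdsZero_le_iff hτ hA hB,
    unbNhdsZero_le_iff hτ hB hA, subset_antisymm_iff, isClosed_closure.closure_subset_iff,
    isClosed_closure.closure_subset_iff, and_comm]

end UnboundedTopology

theorem stmt3_general (τ : TopologicalSpace X) (hτ : IsLocallySolidTop τ)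
    (A B : Set X) (hA : IsOrderIdeal A) (hB : IsOrderIdeal B) :
    (unbTopology τ A = unbTopology τ B ↔ @closure X τ A = @closure X τ B) ∧
      (unbTopology τ A = unbTopology τ Set.univ ↔ @closure X τ A = Set.univ) := by
  refine ⟨unbTopology_eq_iff (τ := τ) hτ hA hB, ?_⟩
  rw [unbTopology_eq_iff (τ := τ) hτ hA isOrderIdeal_univ, closure_univ]

/-- `u_A τ = u_B τ` iff the `τ`-closures of `A` and `B` agree; in
particular `u_A τ = u τ` iff `A` is `τ`-dense. -/
theorem stmt3 (hArch : VLArchimedean X) (τ : TopologicalSpace X) (hτ : IsLocallySolidTop τ)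
    (A B : Set X) (hA : IsOrderIdeal A) (hB : IsOrderIdeal B) :
    (unbTopology τ A = unbTopology τ B ↔ @closure X τ A = @closure X τ B) ∧
      (unbTopology τ A = unbTopology τ Set.univ ↔ @closure X τ A = Set.univ) :=
  stmt3_general τ hτ A B hA hB
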